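/- Fix an integer p ≥ 2, f ∈ 𝓕, and a sequence (κ_n) of nonzero real numbers with κ_n → 0. Then, as n → ∞, log( c_{p,κ_n,f} / c_p ) = −κ_n/p − (3 κ_n² / (2 p (p+2))) f''(0) + κ_n²/(2p²) + o(κ_n²). -/

import Mathlib

/-!
Write `w(s) = (1 - s²)^a` with `a = (p - 3)/2`, so `2a + 3 = p`, and `J₀ = ∫₋₁¹ w = 1 / c_p`.
Integrating `d/ds [s^(k+1) (1 - s²)^(a+1)]` over `[-1, 1]` (the boundary terms vanish)
gives `∫ s² w = J₀ / p` and `∫ s⁴ w = 3 J₀ / (p (p + 2))`. Expanding `f(κ s²)` to second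
order under the integral, with a remainder `o(κ²)` uniformly in `s ∈ [-1, 1]`, therefore gives
`c_p / c_{p,κ,f} = 1 + κ / p + 3 f''(0) κ² / (2 p (p + 2)) + o(κ²)`,
and `log (1 + x) = x - x² / 2 + o(x²)` turns this into the expansion of `-log (c_p / c_{p,κ,f})`.
-/

open MeasureTheory Filter Real Asymptotics
open scoped ENNReal NNReal Topology

noncomputable section

/-- The normalizing constant `c_p = 1 / ∫_{-1}^1 (1-s²)^{(p-3)/2} ds`. -/
def c0 (p : ℕ) : ℝ := 1 / ∫ s in (-1:ℝ)..1, (1 - s ^ 2) ^ (((p : ℝ) - 3) / 2)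

/-- The normalizing constant `c_{p,κ,f} = 1 / ∫_{-1}^1 (1-s²)^{(p-3)/2} f(κ s²) ds`. -/
def cKF (p : ℕ) (κ : ℝ) (f : ℝ → ℝ) : ℝ :=
  1 / ∫ s in (-1:ℝ)..1, (1 - s ^ 2) ^ (((p : ℝ) - 3) / 2) * f (κ * s ^ 2)

section Weight

variable {a : ℝ}

theorem intervalIntegrable_one_sub_sq_rpow (ha : -1 < a) :
    IntervalIntegrable (fun s : ℝ => (1 - s ^ 2) ^ a) volume (-1) 1 := by
  have hfactor : ∀ s ∈ Set.Icc (-1 : ℝ) 1, (1 - s ^ 2) ^ a = (1 - s) ^ a * (1 + s) ^ a := by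
    intro s hs
    rw [← mul_rpow (by linarith [hs.2]) (by linarith [hs.1])]
    ring_nf
  have hright : IntervalIntegrable (fun s : ℝ => (1 - s ^ 2) ^ a) volume 0 1 := by
    have hsing : IntervalIntegrable (fun s : ℝ => (1 - s) ^ a) volume 0 1 := by
      simpa using (intervalIntegral.intervalIntegrable_rpow' ha (a := 1) (b := 0)).comp_sub_left 1
    refine (hsing.mul_continuousOn (g := fun s => (1 + s) ^ a) ?_).congr fun s hs => ?_
    · refine ContinuousOn.rpow_const (by fun_prop) fun s hs => Or.inl ?_
      rw [Set.uIcc_of_le zero_le_one] at hs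
      linarith [hs.1]
    · rw [Set.uIoc_of_le zero_le_one] at hs
      exact (hfactor s ⟨by linarith [hs.1], hs.2⟩).symm
  have hleft : IntervalIntegrable (fun s : ℝ => (1 - s ^ 2) ^ a) volume (-1) 0 := by
    simpa using ((IntervalIntegrable.iff_comp_neg).mp hright).symm
  exact hleft.trans hright

theorem integral_one_sub_sq_rpow_pos (ha : -1 < a) :
    0 < ∫ s in (-1 : ℝ)..1, (1 - s ^ 2) ^ a :=
  intervalIntegral.intervalIntegral_pos_of_pos_on (intervalIntegrable_one_sub_sq_rpow ha)
    (fun s hs => rpow_pos_of_pos (by nlinarith [hs.1, hs.2]) a) (by norm_num)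

theorem integral_pow_mul_one_sub_sq_rpow_recurrence (ha : -1 < a) (k : ℕ) :
    (k + 2 * a + 3) * ∫ s in (-1 : ℝ)..1, s ^ (k + 2) * (1 - s ^ 2) ^ a
      = (k + 1) * ∫ s in (-1 : ℝ)..1, s ^ k * (1 - s ^ 2) ^ a := by
  have hw := intervalIntegrable_one_sub_sq_rpow ha
  have hderiv : ∀ s ∈ Set.Ioo (-1 : ℝ) 1,
      HasDerivAt (fun s : ℝ => s ^ (k + 1) * (1 - s ^ 2) ^ (a + 1))
        ((k + 1) * (s ^ k * (1 - s ^ 2) ^ a) - (k + 2 * a + 3) * (s ^ (k + 2) * (1 - s ^ 2) ^ a))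
        s := by
    intro s hs
    have hpos : 0 < 1 - s ^ 2 := by nlinarith [hs.1, hs.2]
    have h := (hasDerivAt_pow (k + 1) s).mul
      (((hasDerivAt_pow 2 s).const_sub 1).rpow_const (p := a + 1) (Or.inl hpos.ne'))
    refine h.congr_deriv ?_
    rw [add_sub_cancel_right, rpow_add_one hpos.ne']
    push_cast
    ring
  have hcont : ContinuousOn (fun s : ℝ => s ^ (k + 1) * (1 - s ^ 2) ^ (a + 1)) (Set.Icc (-1) 1) :=
    (continuous_pow _).continuousOn.mul
      (ContinuousOn.rpow_const (by fun_prop) fun _ _ => Or.inr (by linarith))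
  have hftc := intervalIntegral.integral_eq_sub_of_hasDerivAt_of_le (by norm_num) hcont hderiv
    (((hw.continuousOn_mul (continuous_pow k).continuousOn).const_mul _).sub
      ((hw.continuousOn_mul (continuous_pow (k + 2)).continuousOn).const_mul _))
  rw [intervalIntegral.integral_sub
      ((hw.continuousOn_mul (continuous_pow k).continuousOn).const_mul _)
      ((hw.continuousOn_mul (continuous_pow (k + 2)).continuousOn).const_mul _),
    intervalIntegral.integral_const_mul, intervalIntegral.integral_const_mul] at hftc
  have hboundary : ∀ s : ℝ, s ^ 2 = 1 → s ^ (k + 1) * (1 - s ^ 2) ^ (a + 1) = 0 := by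
    intro s hs
    rw [hs, sub_self, zero_rpow (by linarith), mul_zero]
  rw [hboundary 1 (one_pow 2), hboundary (-1) (by norm_num), sub_self] at hftc
  linarith

theorem integral_sq_mul_one_sub_sq_rpow (ha : -1 < a) :
    ∫ s in (-1 : ℝ)..1, s ^ 2 * (1 - s ^ 2) ^ a
      = (∫ s in (-1 : ℝ)..1, (1 - s ^ 2) ^ a) / (2 * a + 3) := by
  have h := integral_pow_mul_one_sub_sq_rpow_recurrence ha 0
  simp only [CharP.cast_eq_zero, zero_add, pow_zero, one_mul] at h
  rw [eq_div_iff (by linarith)]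
  linarith

theorem integral_pow_four_mul_one_sub_sq_rpow (ha : -1 < a) :
    ∫ s in (-1 : ℝ)..1, s ^ 4 * (1 - s ^ 2) ^ a
      = 3 * (∫ s in (-1 : ℝ)..1, (1 - s ^ 2) ^ a) / ((2 * a + 3) * (2 * a + 5)) := by
  have h := integral_pow_mul_one_sub_sq_rpow_recurrence ha 2
  rw [integral_sq_mul_one_sub_sq_rpow ha] at h
  have h₃ : 2 * a + 3 ≠ 0 := by linarith
  have h₅ : 2 * a + 5 ≠ 0 := by linarith
  field_simp at h ⊢
  linear_combination h

end Weight

theorem isLittleO_pow_succ_of_hasDerivAt {E : Type*} [NormedAddCommGroup E] [NormedSpace ℝ E]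
    {g g' : ℝ → E} {n : ℕ} (hg0 : g 0 = 0) (hg : ∀ᶠ x in 𝓝 0, HasDerivAt g (g' x) x)
    (hg' : g' =o[𝓝 0] fun x => x ^ n) :
    g =o[𝓝 0] fun x => x ^ (n + 1) := by
  refine isLittleO_iff.mpr fun ε hε => ?_
  obtain ⟨δ, hδ, hball⟩ := Metric.eventually_nhds_iff_ball.mp (hg.and (hg'.def hε))
  filter_upwards [Metric.ball_mem_nhds 0 hδ] with x hx
  have hsub : Metric.closedBall (0 : ℝ) ‖x‖ ⊆ Metric.ball 0 δ :=
    Metric.closedBall_subset_ball (by simpa using hx)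
  have hmvt := (convex_closedBall (0 : ℝ) ‖x‖).norm_image_sub_le_of_norm_hasDerivWithin_le
    (s := Metric.closedBall 0 ‖x‖) (fun y hy => (hball y (hsub hy)).1.hasDerivWithinAt)
    (fun y hy => ?_)
    (Metric.mem_closedBall_self (norm_nonneg x)) (by simp : x ∈ Metric.closedBall 0 ‖x‖)
    (C := ε * ‖x‖ ^ n)
  · simpa [hg0, norm_pow, pow_succ, mul_assoc] using hmvt
  · refine (hball y (hsub hy)).2.trans ?_
    rw [norm_pow]
    gcongr
    simpa using hy

-- Unlike `taylor_isLittleO`, this needs `f'` to be differentiable only at `0`, not `f` to be `C²`.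
theorem isLittleO_sub_taylor_two {f f' : ℝ → ℝ} {c : ℝ}
    (hf : ∀ᶠ x in 𝓝 0, HasDerivAt f (f' x) x) (hf' : HasDerivAt f' c 0) :
    (fun x => f x - f 0 - f' 0 * x - c / 2 * x ^ 2) =o[𝓝 0] fun x => x ^ 2 := by
  refine isLittleO_pow_succ_of_hasDerivAt (g' := fun x => f' x - f' 0 - c * x) (n := 1)
    (by simp) ?_ ?_
  · filter_upwards [hf] with x hx
    refine ((hx.sub_const _).sub ((hasDerivAt_id x).const_mul _)).sub
      ((hasDerivAt_pow 2 x).const_mul _) |>.congr_deriv ?_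
    simp only [mul_one, Nat.cast_ofNat, Nat.add_one_sub_one, pow_one, sub_right_inj]
    ring
  · simpa [mul_comm] using hasDerivAt_iff_isLittleO.mp hf'

theorem isLittleO_log_one_add_sub_taylor :
    (fun x => log (1 + x) - x + x ^ 2 / 2) =o[𝓝 0] fun x => x ^ 2 := by
  have hf : ∀ᶠ x in 𝓝 (0 : ℝ), HasDerivAt (fun x => log (1 + x)) (1 + x)⁻¹ x := by
    filter_upwards [Metric.ball_mem_nhds (0 : ℝ) one_pos] with x hx
    have hx' : 1 + x ≠ 0 := by
      rw [Metric.mem_ball, dist_zero_right, norm_eq_abs] at hx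
      linarith [neg_abs_le x]
    exact (((hasDerivAt_id x).const_add 1).log hx').congr_deriv (one_div _)
  have hf' : HasDerivAt (fun x : ℝ => (1 + x)⁻¹) (-1) 0 :=
    (((hasDerivAt_id (0 : ℝ)).const_add 1).inv (by norm_num)).congr_deriv (by norm_num)
  refine (isLittleO_sub_taylor_two hf hf').congr_left fun x => ?_
  simp only [add_zero, log_one, sub_zero, inv_one, one_mul]
  ring

theorem isLittleO_log_one_add_sub {v : ℝ → ℝ} {α β : ℝ}
    (hv : (fun t => v t - (α * t + β * t ^ 2)) =o[𝓝 0] fun t => t ^ 2) :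
    (fun t => log (1 + v t) - (α * t + (β - α ^ 2 / 2) * t ^ 2)) =o[𝓝 0] fun t => t ^ 2 := by
  have hsq : (fun t : ℝ => t ^ 2) =o[𝓝 0] fun t => t := by
    simpa using isLittleO_pow_pow (𝕜 := ℝ) (m := 1) (n := 2) (by norm_num)
  have hlin : (fun t => α * t) =O[𝓝 (0 : ℝ)] fun t => t := (isBigO_refl _ _).const_mul_left α
  have hv₁ : (fun t => v t - α * t) =o[𝓝 0] fun t => t :=
    ((hv.trans hsq).add (hsq.const_mul_left β)).congr_left fun t => by ring
  have hvO : v =O[𝓝 0] fun t => t := (hv₁.isBigO.add hlin).congr_left fun t => by ring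
  have hlog : (fun t => log (1 + v t) - v t + v t ^ 2 / 2) =o[𝓝 0] fun t => t ^ 2 :=
    (isLittleO_log_one_add_sub_taylor.comp_tendsto
      (by simpa using hvO.trans_tendsto tendsto_id)).trans_isBigO (hvO.pow 2)
  have hdiff_sq : (fun t => v t ^ 2 - (α * t) ^ 2) =o[𝓝 0] fun t => t ^ 2 :=
    (hv₁.mul_isBigO (hvO.add hlin)).congr (fun t => by ring) fun t => by ring
  refine ((hlog.add hv).sub (hdiff_sq.const_mul_left (1 / 2))).congr_left fun t => ?_
  ring

section Integral

variable {w : ℝ → ℝ}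

theorem abs_mul_sq_le_of_mem_Icc {t s : ℝ} (hs : s ∈ Set.Icc (-1 : ℝ) 1) :
    |t * s ^ 2| ≤ |t| := by
  rw [abs_mul, abs_of_nonneg (sq_nonneg s)]
  exact mul_le_of_le_one_right (abs_nonneg t) (by nlinarith [hs.1, hs.2])

theorem eventually_intervalIntegrable_mul_comp_mul_sq {g : ℝ → ℝ}
    (hw : IntervalIntegrable w volume (-1) 1) (hg : ∀ᶠ x in 𝓝 0, ContinuousAt g x) :
    ∀ᶠ t in 𝓝 0, IntervalIntegrable (fun s => w s * g (t * s ^ 2)) volume (-1) 1 := by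
  obtain ⟨δ, hδ, hball⟩ := Metric.eventually_nhds_iff_ball.mp hg
  filter_upwards [Metric.ball_mem_nhds 0 hδ] with t ht
  refine hw.mul_continuousOn fun s hs => ?_
  rw [Set.uIcc_of_le (by norm_num)] at hs
  refine ((hball _ ?_).comp
    (by fun_prop : Continuous fun s => t * s ^ 2).continuousAt).continuousWithinAt
  rw [Metric.mem_ball, dist_zero_right, norm_eq_abs] at ht ⊢
  exact (abs_mul_sq_le_of_mem_Icc hs).trans_lt ht

theorem isLittleO_integral_mul_comp_mul_sq {r : ℝ → ℝ}
    (hw : IntervalIntegrable w volume (-1) 1) (hr : r =o[𝓝 0] fun x => x ^ 2) :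
    (fun t => ∫ s in (-1 : ℝ)..1, w s * r (t * s ^ 2)) =o[𝓝 0] fun t => t ^ 2 := by
  set I := ∫ s in (-1 : ℝ)..1, |w s|
  have hI : 0 ≤ I := intervalIntegral.integral_nonneg (by norm_num) fun _ _ => abs_nonneg _
  refine isLittleO_iff.mpr fun ε hε => ?_
  obtain ⟨δ, hδ, hball⟩ :=
    Metric.eventually_nhds_iff_ball.mp (hr.def (div_pos hε (hI.trans_lt (lt_add_one I))))
  filter_upwards [Metric.ball_mem_nhds 0 hδ] with t ht
  rw [Metric.mem_ball, dist_zero_right] at ht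
  have hpoint : ∀ s ∈ Set.Ioc (-1 : ℝ) 1,
      ‖w s * r (t * s ^ 2)‖ ≤ ε / (I + 1) * t ^ 2 * |w s| := by
    intro s hs
    have hts := abs_mul_sq_le_of_mem_Icc (t := t) (Set.Ioc_subset_Icc_self hs)
    have hr_le := hball (t * s ^ 2) (by simpa using hts.trans_lt ht)
    have hsq : ‖(t * s ^ 2) ^ 2‖ ≤ t ^ 2 := by
      rw [norm_pow, norm_eq_abs, ← sq_abs t]
      gcongr
    rw [norm_mul, norm_eq_abs]
    calc |w s| * ‖r (t * s ^ 2)‖ ≤ |w s| * (ε / (I + 1) * t ^ 2) := by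
          gcongr
          exact hr_le.trans (mul_le_mul_of_nonneg_left hsq (by positivity))
      _ = _ := by ring
  calc ‖∫ s in (-1 : ℝ)..1, w s * r (t * s ^ 2)‖
      ≤ ∫ s in (-1 : ℝ)..1, ε / (I + 1) * t ^ 2 * |w s| :=
        intervalIntegral.norm_integral_le_of_norm_le (by norm_num) (ae_of_all _ hpoint)
          (hw.abs.const_mul _)
    _ = ε * (I / (I + 1)) * t ^ 2 := by rw [intervalIntegral.integral_const_mul]; ring
    _ ≤ ε * 1 * t ^ 2 := by gcongr; exact (div_le_one (by linarith)).mpr (by linarith)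
    _ = ε * ‖t ^ 2‖ := by rw [mul_one, norm_pow, norm_eq_abs, sq_abs]

end Integral

theorem isLittleO_integral_one_sub_sq_rpow_mul_comp {a : ℝ} (ha : -1 < a)
    {f f' : ℝ → ℝ} {c : ℝ} (hf : ∀ᶠ x in 𝓝 0, HasDerivAt f (f' x) x) (hf' : HasDerivAt f' c 0)
    (hf0 : f 0 = 1) :
    (fun t => (∫ s in (-1 : ℝ)..1, (1 - s ^ 2) ^ a * f (t * s ^ 2))
        / (∫ s in (-1 : ℝ)..1, (1 - s ^ 2) ^ a) - 1
        - (f' 0 / (2 * a + 3) * t + 3 * c / (2 * (2 * a + 3) * (2 * a + 5)) * t ^ 2))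
      =o[𝓝 0] fun t => t ^ 2 := by
  have hw := intervalIntegrable_one_sub_sq_rpow ha
  have hJ₀ := (integral_one_sub_sq_rpow_pos ha).ne'
  have h₃ : 2 * a + 3 ≠ 0 := by linarith
  have h₅ : 2 * a + 5 ≠ 0 := by linarith
  have hremainder := (isLittleO_integral_mul_comp_mul_sq hw
    (isLittleO_sub_taylor_two hf hf')).const_mul_left (∫ s in (-1 : ℝ)..1, (1 - s ^ 2) ^ a)⁻¹
  refine hremainder.congr' ?_ EventuallyEq.rfl
  filter_upwards [eventually_intervalIntegrable_mul_comp_mul_sq hw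
    (hf.mono fun x hx => hx.continuousAt)] with t ht
  have hw₂ := hw.continuousOn_mul (continuous_pow 2).continuousOn
  have hw₄ := hw.continuousOn_mul (continuous_pow 4).continuousOn
  have hsplit : ∫ s in (-1 : ℝ)..1, (1 - s ^ 2) ^ a
      * (f (t * s ^ 2) - f 0 - f' 0 * (t * s ^ 2) - c / 2 * (t * s ^ 2) ^ 2)
      = (∫ s in (-1 : ℝ)..1, (1 - s ^ 2) ^ a * f (t * s ^ 2))
        - ((∫ s in (-1 : ℝ)..1, (1 - s ^ 2) ^ a)
          + f' 0 * t * (∫ s in (-1 : ℝ)..1, s ^ 2 * (1 - s ^ 2) ^ a)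
          + c / 2 * t ^ 2 * (∫ s in (-1 : ℝ)..1, s ^ 4 * (1 - s ^ 2) ^ a)) := by
    rw [← intervalIntegral.integral_const_mul, ← intervalIntegral.integral_const_mul,
      ← intervalIntegral.integral_add hw (hw₂.const_mul _),
      ← intervalIntegral.integral_add (hw.add (hw₂.const_mul _)) (hw₄.const_mul _),
      ← intervalIntegral.integral_sub ht ((hw.add (hw₂.const_mul _)).add (hw₄.const_mul _))]
    congr 1
    ext s
    rw [hf0]
    ring
  rw [hsplit, integral_sq_mul_one_sub_sq_rpow ha, integral_pow_four_mul_one_sub_sq_rpow ha]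
  generalize (∫ s in (-1 : ℝ)..1, (1 - s ^ 2) ^ a * f (t * s ^ 2)) = G at *
  field_simp
  ring

theorem log_normalizing_constant_expansion_general
    (p : ℕ) (hp : 2 ≤ p)
    (f : ℝ → ℝ)
    (hf_diff : ∀ᶠ x in 𝓝 (0:ℝ), DifferentiableAt ℝ f x)
    (hf_diff2 : DifferentiableAt ℝ (deriv f) 0)
    (hf0 : f 0 = 1) (hf'0 : deriv f 0 = 1)
    (κ : ℕ → ℝ) (hκ : Tendsto κ atTop (𝓝 (0:ℝ))) :
    (fun n => Real.log (cKF p (κ n) f / c0 p)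
        - (-(κ n) / (p:ℝ) - (3 * κ n ^ 2 / (2 * (p:ℝ) * ((p:ℝ) + 2))) * deriv (deriv f) 0
            + κ n ^ 2 / (2 * (p:ℝ) ^ 2)))
      =o[atTop] (fun n => κ n ^ 2) := by
  have ha : -1 < ((p : ℝ) - 3) / 2 := by
    have hp' : (2 : ℝ) ≤ p := by exact_mod_cast hp
    linarith
  have h₃ : 2 * (((p : ℝ) - 3) / 2) + 3 = p := by ring
  have h₅ : 2 * (((p : ℝ) - 3) / 2) + 5 = p + 2 := by ring
  have hexp := isLittleO_log_one_add_sub (isLittleO_integral_one_sub_sq_rpow_mul_comp ha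
    (hf_diff.mono fun x hx => hx.hasDerivAt) hf_diff2.hasDerivAt hf0)
  rw [h₃, h₅, hf'0] at hexp
  refine (hexp.neg_left.comp_tendsto hκ).congr_left fun n => ?_
  have hratio : ∀ x y : ℝ, 1 / x / (1 / y) = (1 + (x / y - 1))⁻¹ := fun x y => by
    rw [add_sub_cancel]
    field_simp
  simp only [Function.comp_apply, cKF, c0, hratio, Real.log_inv]
  generalize Real.log _ = L
  field_simp
  ring

/-- expansion of the log normalizing constant.
For `f ∈ 𝓕` and nonzero `κ_n → 0`,
`log(c_{p,κ_n,f}/c_p) = -κ_n/p - (3κ_n²/(2p(p+2))) f''(0) + κ_n²/(2p²) + o(κ_n²)`. -/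
theorem log_normalizing_constant_expansion
    (p : ℕ) (hp : 2 ≤ p)
    (f : ℝ → ℝ) (hf_pos : ∀ x, 0 < f x) (hf_mono : Monotone f)
    (hf_diff : ∀ᶠ x in 𝓝 (0:ℝ), DifferentiableAt ℝ f x)
    (hf_diff2 : DifferentiableAt ℝ (deriv f) 0)
    (hf0 : f 0 = 1) (hf'0 : deriv f 0 = 1)
    (κ : ℕ → ℝ) (hκ0 : ∀ n, κ n ≠ 0) (hκ : Tendsto κ atTop (𝓝 (0:ℝ))) :
    (fun n => Real.log (cKF p (κ n) f / c0 p)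
        - (-(κ n) / (p:ℝ) - (3 * κ n ^ 2 / (2 * (p:ℝ) * ((p:ℝ) + 2))) * deriv (deriv f) 0
            + κ n ^ 2 / (2 * (p:ℝ) ^ 2)))
      =o[atTop] (fun n => κ n ^ 2) :=
  log_normalizing_constant_expansion_general p hp f hf_diff hf_diff2 hf0 hf'0 κ hκ
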